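/- Let G be a finite maximal triangle-free graph that does not contain H_10 - v (the Petersen graph minus a vertex) as a subgraph. Then G is (K_1+2K_2)-free, (K_1+C_5)-free and C_6-free (as induced subgraphs). -/
import Mathlib


/-- The 6-cycle `C₆`. -/
def C6 : SimpleGraph (ZMod 6) :=
  SimpleGraph.fromRel (fun i j => j = i + 1)

/-- The graph `K₁ + 2K₂`: vertex 0 is isolated, with edges 1-2 and 3-4. -/
def K1plus2K2 : SimpleGraph (Fin 5) :=
  SimpleGraph.fromRel (fun i j => (i = 1 ∧ j = 2) ∨ (i = 3 ∧ j = 4))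

/-- The graph `K₁ + C₅`: vertex 0 is isolated and 1,2,3,4,5 form a 5-cycle. -/
def K1plusC5 : SimpleGraph (Fin 6) :=
  SimpleGraph.fromRel (fun i j =>
    (i = 1 ∧ j = 2) ∨ (i = 2 ∧ j = 3) ∨ (i = 3 ∧ j = 4) ∨ (i = 4 ∧ j = 5) ∨ (i = 5 ∧ j = 1))

/-- The Petersen graph minus a vertex, `H₁₀ - v`. -/
def H10minusV : SimpleGraph (Fin 9) :=
  SimpleGraph.fromRel (fun i j =>
    (i, j) ∈ ([(0,1), (1,2), (2,3), (3,4), (4,0),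
               (5,7), (6,8), (8,5),
               (0,5), (1,6), (2,7), (3,8)] : List (Fin 9 × Fin 9)))

instance : DecidableRel H10minusV.Adj := fun a b =>
  decidable_of_iff _ (SimpleGraph.fromRel_adj _ a b).symm

set_option maxHeartbeats 3200000 in
lemma h10_helper {V : Type*} (G : SimpleGraph V) (b0 b1 b2 b3 b4 b5 b6 b7 b8 : V)
    (q02 : b0 ≠ b2)
    (q03 : b0 ≠ b3)
    (q06 : b0 ≠ b6)
    (q07 : b0 ≠ b7)
    (q08 : b0 ≠ b8)
    (q13 : b1 ≠ b3)
    (q14 : b1 ≠ b4)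
    (q15 : b1 ≠ b5)
    (q17 : b1 ≠ b7)
    (q18 : b1 ≠ b8)
    (q24 : b2 ≠ b4)
    (q25 : b2 ≠ b5)
    (q26 : b2 ≠ b6)
    (q28 : b2 ≠ b8)
    (q35 : b3 ≠ b5)
    (q36 : b3 ≠ b6)
    (q37 : b3 ≠ b7)
    (q45 : b4 ≠ b5)
    (q46 : b4 ≠ b6)
    (q47 : b4 ≠ b7)
    (q48 : b4 ≠ b8)
    (q56 : b5 ≠ b6)
    (q67 : b6 ≠ b7)
    (q78 : b7 ≠ b8)
    (p01 : G.Adj b0 b1)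
    (p12 : G.Adj b1 b2)
    (p23 : G.Adj b2 b3)
    (p34 : G.Adj b3 b4)
    (p40 : G.Adj b4 b0)
    (p57 : G.Adj b5 b7)
    (p68 : G.Adj b6 b8)
    (p85 : G.Adj b8 b5)
    (p05 : G.Adj b0 b5)
    (p16 : G.Adj b1 b6)
    (p27 : G.Adj b2 b7)
    (p38 : G.Adj b3 b8)
    : ∃ f : Fin 9 ↪ V, ∀ a b : Fin 9, H10minusV.Adj a b → G.Adj (f a) (f b) := by
  have q01 : b0 ≠ b1 := p01.ne
  have q12 : b1 ≠ b2 := p12.ne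
  have q23 : b2 ≠ b3 := p23.ne
  have q34 : b3 ≠ b4 := p34.ne
  have q04 : b0 ≠ b4 := p40.ne'
  have q57 : b5 ≠ b7 := p57.ne
  have q68 : b6 ≠ b8 := p68.ne
  have q58 : b5 ≠ b8 := p85.ne'
  have q05 : b0 ≠ b5 := p05.ne
  have q16 : b1 ≠ b6 := p16.ne
  have q27 : b2 ≠ b7 := p27.ne
  have q38 : b3 ≠ b8 := p38.ne
  refine ⟨⟨![b0,b1,b2,b3,b4,b5,b6,b7,b8], ?_⟩, ?_⟩
  · intro i j h
    fin_cases i <;> fin_cases j <;>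
      first | rfl | exact absurd h q01 | exact absurd h.symm q01 | exact absurd h q02 | exact absurd h.symm q02 | exact absurd h q03 | exact absurd h.symm q03 | exact absurd h q04 | exact absurd h.symm q04 | exact absurd h q05 | exact absurd h.symm q05 | exact absurd h q06 | exact absurd h.symm q06 | exact absurd h q07 | exact absurd h.symm q07 | exact absurd h q08 | exact absurd h.symm q08 | exact absurd h q12 | exact absurd h.symm q12 | exact absurd h q13 | exact absurd h.symm q13 | exact absurd h q14 | exact absurd h.symm q14 | exact absurd h q15 | exact absurd h.symm q15 | exact absurd h q16 | exact absurd h.symm q16 | exact absurd h q17 | exact absurd h.symm q17 | exact absurd h q18 | exact absurd h.symm q18 | exact absurd h q23 | exact absurd h.symm q23 | exact absurd h q24 | exact absurd h.symm q24 | exact absurd h q25 | exact absurd h.symm q25 | exact absurd h q26 | exact absurd h.symm q26 | exact absurd h q27 | exact absurd h.symm q27 | exact absurd h q28 | exact absurd h.symm q28 | exact absurd h q34 | exact absurd h.symm q34 | exact absurd h q35 | exact absurd h.symm q35 | exact absurd h q36 | exact absurd h.symm q36 | exact absurd h q37 | exact absurd h.symm q37 | exact absurd h q38 | exact absurd h.symm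 q38 | exact absurd h q45 | exact absurd h.symm q45 | exact absurd h q46 | exact absurd h.symm q46 | exact absurd h q47 | exact absurd h.symm q47 | exact absurd h q48 | exact absurd h.symm q48 | exact absurd h q56 | exact absurd h.symm q56 | exact absurd h q57 | exact absurd h.symm q57 | exact absurd h q58 | exact absurd h.symm q58 | exact absurd h q67 | exact absurd h.symm q67 | exact absurd h q68 | exact absurd h.symm q68 | exact absurd h q78 | exact absurd h.symm q78
  · intro a b hab
    fin_cases a <;> fin_cases b <;>
      first | exact p01 | exact p01.symm | exact p12 | exact p12.symm | exact p23 | exact p23.symm | exact p34 | exact p34.symm | exact p40 | exact p40.symm | exact p57 | exact p57.symm | exact p68 | exact p68.symm | exact p85 | exact p85.symm | exact p05 | exact p05.symm | exact p16 | exact p16.symm | exact p27 | exact p27.symm | exact p38 | exact p38.symm | exact absurd hab (by decide)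

lemma c6_config {V : Type*} (G : SimpleGraph V)
    (tri : ∀ a b c : V, G.Adj a b → G.Adj a c → G.Adj b c → False)
    (hmaxtf : ∀ x y : V, x ≠ y → ¬ G.Adj x y → ∃ z, G.Adj x z ∧ G.Adj y z)
    (v0 v1 v2 v3 v4 v5 : V)
    (e01 : G.Adj v0 v1) (e12 : G.Adj v1 v2) (e23 : G.Adj v2 v3)
    (e34 : G.Adj v3 v4) (e45 : G.Adj v4 v5) (e50 : G.Adj v5 v0)
    (n02 : ¬ G.Adj v0 v2) (n13 : ¬ G.Adj v1 v3) (n24 : ¬ G.Adj v2 v4)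
    (n35 : ¬ G.Adj v3 v5) (n40 : ¬ G.Adj v4 v0) (n51 : ¬ G.Adj v5 v1)
    (n03 : ¬ G.Adj v0 v3) (n14 : ¬ G.Adj v1 v4) (n25 : ¬ G.Adj v2 v5)
    (d03 : v0 ≠ v3) (d14 : v1 ≠ v4) (d25 : v2 ≠ v5)
    (d02 : v0 ≠ v2) (d13 : v1 ≠ v3) (d24 : v2 ≠ v4)
    (d35 : v3 ≠ v5) (d40 : v4 ≠ v0) (d51 : v5 ≠ v1) :
    ∃ f : Fin 9 ↪ V, ∀ a b : Fin 9, H10minusV.Adj a b → G.Adj (f a) (f b) := by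
  obtain ⟨w1, hw1a, hw1b⟩ := hmaxtf v0 v3 d03 n03
  obtain ⟨w2, hw2a, hw2b⟩ := hmaxtf v1 v4 d14 n14
  obtain ⟨w3, hw3a, hw3b⟩ := hmaxtf v2 v5 d25 n25
  exact h10_helper G v0 v1 v2 v3 w1 v5 w2 w3 v4
    d02 d03
    (fun h => n40 (by rw [h]; exact hw2b))
    (fun h => n02 (by rw [h]; exact hw3a.symm))
    d40.symm d13
    (fun h => n13 (by rw [h]; exact hw1b.symm))
    d51.symm
    (fun h => n51 (by rw [h]; exact hw3b))
    d14
    (fun h => n02 (by rw [h]; exact hw1a))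
    d25
    (fun h => n24 (by rw [h]; exact hw2b.symm))
    d24 d35
    (fun h => n13 (by rw [h]; exact hw2a))
    (fun h => n35 (by rw [h]; exact hw3b.symm))
    (fun h => n35 (by rw [← h]; exact hw1b))
    (fun h => tri v0 v1 w1 e01 hw1a (by rw [h]; exact hw2a))
    (fun h => tri v2 v3 w1 e23 (by rw [h]; exact hw3a) hw1b)
    (fun h => n40 (by rw [← h]; exact hw1a.symm))
    (fun h => n51 (by rw [h]; exact hw2a.symm))
    (fun h => tri v1 v2 w2 e12 hw2a (by rw [h]; exact hw3a))
    (fun h => n24 (by rw [← h]; exact hw3a))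
    e01 e12 e23 hw1b hw1a.symm hw3b hw2b.symm e45 e50.symm hw2a hw3a e34

lemma k1c5_core {V : Type*} (G : SimpleGraph V)
    (tri : ∀ a b c : V, G.Adj a b → G.Adj a c → G.Adj b c → False)
    (u v1 v2 v3 v4 v5 x1 x2 x3 : V)
    (e12 : G.Adj v1 v2) (e23 : G.Adj v2 v3) (e34 : G.Adj v3 v4)
    (e45 : G.Adj v4 v5) (e51 : G.Adj v5 v1)
    (nu1 : ¬ G.Adj u v1) (nu2 : ¬ G.Adj u v2) (nu3 : ¬ G.Adj u v3)
    (nu4 : ¬ G.Adj u v4) (nu5 : ¬ G.Adj u v5)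
    (du1 : u ≠ v1) (du2 : u ≠ v2) (du3 : u ≠ v3) (du4 : u ≠ v4) (du5 : u ≠ v5)
    (d13 : v1 ≠ v3) (d14 : v1 ≠ v4) (d53 : v5 ≠ v3) (d52 : v5 ≠ v2) (d24 : v2 ≠ v4)
    (hx1u : G.Adj u x1) (hx1v : G.Adj v1 x1) (h13 : G.Adj x1 v3)
    (hx2u : G.Adj u x2) (hx2v : G.Adj v2 x2) (h24 : G.Adj x2 v4)
    (hx3u : G.Adj u x3) (hx3v : G.Adj v3 x3) (h35 : G.Adj x3 v5) :
    ∃ f : Fin 9 ↪ V, ∀ a b : Fin 9, H10minusV.Adj a b → G.Adj (f a) (f b) := by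
  exact h10_helper G u x1 v1 v5 x3 x2 v3 v2 v4
    du1 du5 du3 du2 du4
    (fun h => nu5 (by rw [← h]; exact hx1u))
    (fun h => tri x3 v5 v1 h35 (by rw [← h]; exact hx1v.symm) e51)
    (fun h => tri x2 v1 v2 (by rw [← h]; exact hx1v.symm) hx2v.symm e12)
    (fun h => nu2 (by rw [← h]; exact hx1u))
    (fun h => nu4 (by rw [← h]; exact hx1u))
    (fun h => nu1 (by rw [h]; exact hx3u))
    (fun h => nu1 (by rw [h]; exact hx2u))
    d13 d14
    (fun h => nu5 (by rw [h]; exact hx2u))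
    d53 d52
    (fun h => tri x2 v4 v3 h24 (by rw [← h]; exact hx3v.symm) e34.symm)
    hx3v.ne'
    (fun h => nu2 (by rw [← h]; exact hx3u))
    (fun h => nu4 (by rw [← h]; exact hx3u))
    (fun h => nu3 (by rw [← h]; exact hx2u))
    e23.ne' d24
    hx1u hx1v.symm e51.symm h35.symm hx3u.symm hx2v.symm e34 h24.symm hx2u h13 e12 e45.symm

lemma c5slot {V : Type*} (G : SimpleGraph V)
    (tri : ∀ a b c : V, G.Adj a b → G.Adj a c → G.Adj b c → False)
    (hmaxtf : ∀ x y : V, x ≠ y → ¬ G.Adj x y → ∃ z, G.Adj x z ∧ G.Adj y z)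
    (u p q r xp xr : V)
    (hpq : G.Adj p q) (hqr : G.Adj q r) (npr : ¬ G.Adj p r) (dpr : p ≠ r)
    (nup : ¬ G.Adj u p) (nuq : ¬ G.Adj u q) (nur : ¬ G.Adj u r)
    (dup : u ≠ p) (duq : u ≠ q) (dur : u ≠ r)
    (hxpu : G.Adj u xp) (hxpv : G.Adj p xp)
    (hxru : G.Adj u xr) (hxrv : G.Adj r xr)
    (sxp : ¬ G.Adj xp r) (sxr : ¬ G.Adj xr p) :
    ∃ f : Fin 9 ↪ V, ∀ a b : Fin 9, H10minusV.Adj a b → G.Adj (f a) (f b) := by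
  apply c6_config G tri hmaxtf xp p q r xr u
    hxpv.symm hpq hqr hxrv hxru.symm hxpu
    (fun h => tri xp p q hxpv.symm h hpq)
    npr
    (fun h => tri q r xr hqr h hxrv)
    (fun h => nur h.symm)
    (fun h => tri u xr xp hxru hxpu h)
    nup
    sxp
    (fun h => sxr h.symm)
    (fun h => nuq h.symm)
    -- d03 d14 d25 : xp ≠ r, p ≠ xr, q ≠ u
    (fun h => nur (by rw [← h]; exact hxpu))
    (fun h => nup (by rw [h]; exact hxru))
    (fun h => duq h.symm)
    -- d02 d13 d24 d35 d40 d51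
    (fun h => nuq (by rw [← h]; exact hxpu))
    dpr
    (fun h => nuq (by rw [h]; exact hxru))
    (fun h => dur h.symm)
    (fun h => sxr (by rw [h]; exact hxpv.symm))
    dup

lemma k1c5_config {V : Type*} (G : SimpleGraph V)
    (tri : ∀ a b c : V, G.Adj a b → G.Adj a c → G.Adj b c → False)
    (hmaxtf : ∀ x y : V, x ≠ y → ¬ G.Adj x y → ∃ z, G.Adj x z ∧ G.Adj y z)
    (hH10 : ¬ ∃ f : Fin 9 ↪ V, ∀ a b : Fin 9, H10minusV.Adj a b → G.Adj (f a) (f b))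
    (u c1 c2 c3 c4 c5 : V)
    (e12 : G.Adj c1 c2) (e23 : G.Adj c2 c3) (e34 : G.Adj c3 c4)
    (e45 : G.Adj c4 c5) (e51 : G.Adj c5 c1)
    (n13 : ¬ G.Adj c1 c3) (n24 : ¬ G.Adj c2 c4) (n35 : ¬ G.Adj c3 c5)
    (n41 : ¬ G.Adj c4 c1) (n52 : ¬ G.Adj c5 c2)
    (d13 : c1 ≠ c3) (d24 : c2 ≠ c4) (d35 : c3 ≠ c5) (d41 : c4 ≠ c1) (d52 : c5 ≠ c2)
    (nu1 : ¬ G.Adj u c1) (nu2 : ¬ G.Adj u c2) (nu3 : ¬ G.Adj u c3)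
    (nu4 : ¬ G.Adj u c4) (nu5 : ¬ G.Adj u c5)
    (du1 : u ≠ c1) (du2 : u ≠ c2) (du3 : u ≠ c3) (du4 : u ≠ c4) (du5 : u ≠ c5) :
    False := by
  obtain ⟨x1, hx1u, hx1v⟩ := hmaxtf u c1 du1 nu1
  obtain ⟨x2, hx2u, hx2v⟩ := hmaxtf u c2 du2 nu2
  obtain ⟨x3, hx3u, hx3v⟩ := hmaxtf u c3 du3 nu3
  obtain ⟨x4, hx4u, hx4v⟩ := hmaxtf u c4 du4 nu4
  obtain ⟨x5, hx5u, hx5v⟩ := hmaxtf u c5 du5 nu5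
  have S13 : ¬ G.Adj x1 c3 → ¬ G.Adj x3 c1 → False := fun hp hr =>
    hH10 (c5slot G tri hmaxtf u c1 c2 c3 x1 x3 e12 e23 n13 d13 nu1 nu2 nu3 du1 du2 du3
      hx1u hx1v hx3u hx3v hp hr)
  have S24 : ¬ G.Adj x2 c4 → ¬ G.Adj x4 c2 → False := fun hp hr =>
    hH10 (c5slot G tri hmaxtf u c2 c3 c4 x2 x4 e23 e34 n24 d24 nu2 nu3 nu4 du2 du3 du4
      hx2u hx2v hx4u hx4v hp hr)
  have S35 : ¬ G.Adj x3 c5 → ¬ G.Adj x5 c3 → False := fun hp hr =>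
    hH10 (c5slot G tri hmaxtf u c3 c4 c5 x3 x5 e34 e45 n35 d35 nu3 nu4 nu5 du3 du4 du5
      hx3u hx3v hx5u hx5v hp hr)
  have S41 : ¬ G.Adj x4 c1 → ¬ G.Adj x1 c4 → False := fun hp hr =>
    hH10 (c5slot G tri hmaxtf u c4 c5 c1 x4 x1 e45 e51 n41 d41 nu4 nu5 nu1 du4 du5 du1
      hx4u hx4v hx1u hx1v hp hr)
  have S52 : ¬ G.Adj x5 c2 → ¬ G.Adj x2 c5 → False := fun hp hr =>
    hH10 (c5slot G tri hmaxtf u c5 c1 c2 x5 x2 e51 e12 n52 d52 nu5 nu1 nu2 du5 du1 du2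
      hx5u hx5v hx2u hx2v hp hr)
  by_cases h13 : G.Adj x1 c3
  · have n14x : ¬ G.Adj x1 c4 := fun h => tri x1 c3 c4 h13 h e34
    have h41 : G.Adj x4 c1 := by by_contra hq; exact S41 hq n14x
    have n42x : ¬ G.Adj x4 c2 := fun h => tri x4 c1 c2 h41 h e12
    have h24 : G.Adj x2 c4 := by by_contra hq; exact S24 hq n42x
    have n25x : ¬ G.Adj x2 c5 := fun h => tri x2 c4 c5 h24 h e45
    have h52 : G.Adj x5 c2 := by by_contra hq; exact S52 hq n25x
    have n53x : ¬ G.Adj x5 c3 := fun h => tri x5 c2 c3 h52 h e23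
    have h35 : G.Adj x3 c5 := by by_contra hq; exact S35 hq n53x
    exact hH10 (k1c5_core G tri u c1 c2 c3 c4 c5 x1 x2 x3 e12 e23 e34 e45 e51
      nu1 nu2 nu3 nu4 nu5 du1 du2 du3 du4 du5
      d13 d41.symm d35.symm d52 d24
      hx1u hx1v h13 hx2u hx2v h24 hx3u hx3v h35)
  · have h31 : G.Adj x3 c1 := by by_contra hq; exact S13 h13 hq
    have n35x : ¬ G.Adj x3 c5 := fun h => tri x3 c1 c5 h31 h e51.symm
    have h53 : G.Adj x5 c3 := by by_contra hq; exact S35 n35x hq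
    have n52x : ¬ G.Adj x5 c2 := fun h => tri x5 c2 c3 h h53 e23
    have h25 : G.Adj x2 c5 := by by_contra hq; exact S52 n52x hq
    have n24x : ¬ G.Adj x2 c4 := fun h => tri x2 c4 c5 h h25 e45
    have h42 : G.Adj x4 c2 := by by_contra hq; exact S24 n24x hq
    have n41x : ¬ G.Adj x4 c1 := fun h => tri x4 c1 c2 h h42 e12
    have h14 : G.Adj x1 c4 := by by_contra hq; exact S41 n41x hq
    exact hH10 (k1c5_core G tri u c1 c5 c4 c3 c2 x1 x5 x4
      e51.symm e45.symm e34.symm e23.symm e12.symm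
      nu1 nu5 nu4 nu3 nu2 du1 du5 du4 du3 du2
      d41.symm d13 d24 d52.symm d35.symm
      hx1u hx1v h14 hx5u hx5v h53 hx4u hx4v h42)

instance : DecidableRel C6.Adj := fun a b =>
  decidable_of_iff _ (SimpleGraph.fromRel_adj _ a b).symm

instance : DecidableRel K1plus2K2.Adj := fun a b =>
  decidable_of_iff _ (SimpleGraph.fromRel_adj _ a b).symm

instance : DecidableRel K1plusC5.Adj := fun a b =>
  decidable_of_iff _ (SimpleGraph.fromRel_adj _ a b).symm

/-- A finite maximal triangle-free graph containing no `H₁₀ - v` as a (not necessarily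
induced) subgraph is `(K₁+2K₂)`-free, `(K₁+C₅)`-free and `C₆`-free. -/
theorem maximalTF_H10v_free_is_free {V : Type*} [Fintype V] (G : SimpleGraph V)
    (hK3 : G.CliqueFree 3)
    (hmaxtf : ∀ x y : V, x ≠ y → ¬ G.Adj x y → ∃ z, G.Adj x z ∧ G.Adj y z)
    (hH10 : ¬ ∃ f : Fin 9 ↪ V, ∀ a b : Fin 9, H10minusV.Adj a b → G.Adj (f a) (f b)) :
    (¬ Nonempty (K1plus2K2 ↪g G)) ∧
    (¬ Nonempty (K1plusC5 ↪g G)) ∧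
    (¬ Nonempty (C6 ↪g G)) := by

  classical
  have tri : ∀ a b c : V, G.Adj a b → G.Adj a c → G.Adj b c → False := fun a b c hab hac hbc =>
    hK3 {a, b, c} (SimpleGraph.is3Clique_triple_iff.mpr ⟨hab, hac, hbc⟩)
  refine ⟨?_, ?_, ?_⟩
  · rintro ⟨e⟩
    have nadj : ∀ i j : Fin 5, ¬ K1plus2K2.Adj i j → ¬ G.Adj (e i) (e j) :=
      fun i j h hg => h (e.map_adj_iff.mp hg)
    have nei : ∀ i j : Fin 5, i ≠ j → e i ≠ e j := fun i j h hh => h (e.injective hh)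
    have Eab : G.Adj (e 1) (e 2) := e.map_adj_iff.mpr (by decide)
    have Ecd : G.Adj (e 3) (e 4) := e.map_adj_iff.mpr (by decide)
    obtain ⟨x, hxb, hxc⟩ := hmaxtf (e 2) (e 3) (nei 2 3 (by decide)) (nadj 2 3 (by decide))
    obtain ⟨y, hya, hyd⟩ := hmaxtf (e 1) (e 4) (nei 1 4 (by decide)) (nadj 1 4 (by decide))
    have nax : ¬ G.Adj (e 1) x := fun h => tri (e 1) (e 2) x Eab h hxb
    have ndx : ¬ G.Adj (e 4) x := fun h => tri (e 4) (e 3) x Ecd.symm h hxc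
    have nby : ¬ G.Adj (e 2) y := fun h => tri (e 2) (e 1) y Eab.symm h hya
    have ncy : ¬ G.Adj (e 3) y := fun h => tri (e 3) (e 4) y Ecd h hyd
    by_cases hxy : G.Adj x y
    · obtain ⟨w, hwb, hwd⟩ := hmaxtf (e 2) (e 4) (nei 2 4 (by decide)) (nadj 2 4 (by decide))
      obtain ⟨w', hw'a, hw'c⟩ := hmaxtf (e 1) (e 3) (nei 1 3 (by decide)) (nadj 1 3 (by decide))
      have naw : ¬ G.Adj (e 1) w := fun h => tri (e 1) (e 2) w Eab h hwb
      have ncw : ¬ G.Adj (e 3) w := fun h => tri (e 3) (e 4) w Ecd h hwd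
      have nbw' : ¬ G.Adj (e 2) w' := fun h => tri (e 2) (e 1) w' Eab.symm h hw'a
      have ndw' : ¬ G.Adj (e 4) w' := fun h => tri (e 4) (e 3) w' Ecd.symm h hw'c
      by_cases hww' : G.Adj w w'
      · have hux : G.Adj (e 0) x := by
          by_contra nux
          by_cases huw' : G.Adj (e 0) w'
          · by_cases huw : G.Adj (e 0) w
            · exact tri (e 0) w w' huw huw' hww'
            · -- cycle C = (x, c, d, w, b)
              exact k1c5_config G tri hmaxtf hH10 (e 0) x (e 3) (e 4) w (e 2)
                hxc.symm Ecd hwd hwb.symm hxb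
                (fun h => ndx h.symm) ncw (nadj 4 2 (by decide))
                (fun h => tri w (e 2) x hwb.symm h hxb)
                (nadj 2 3 (by decide))
                (fun h => nadj 4 2 (by decide) (by rw [← h]; exact hxb.symm))
                (fun h => nadj 3 2 (by decide) (by rw [h]; exact hwb.symm))
                (nei 4 2 (by decide))
                (fun h => ncw (by rw [h]; exact hxc))
                (nei 2 3 (by decide))
                nux (nadj 0 3 (by decide)) (nadj 0 4 (by decide)) huw (nadj 0 2 (by decide))
                (fun h => nadj 0 2 (by decide) (by rw [h]; exact hxb.symm))
                (nei 0 3 (by decide)) (nei 0 4 (by decide))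
                (fun h => nadj 0 2 (by decide) (by rw [h]; exact hwb.symm))
                (nei 0 2 (by decide))
          · -- cycle B = (b, a, w', c, x)
            exact k1c5_config G tri hmaxtf hH10 (e 0) (e 2) (e 1) w' (e 3) x
              Eab.symm hw'a hw'c.symm hxc hxb.symm
              nbw' (nadj 1 3 (by decide))
              (fun h => tri w' (e 3) x hw'c.symm h hxc)
              (nadj 3 2 (by decide))
              (fun h => nax h.symm)
              (fun h => nadj 2 3 (by decide) (by rw [h]; exact hw'c.symm))
              (nei 1 3 (by decide))
              (fun h => nbw' (by rw [h]; exact hxb))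
              (nei 3 2 (by decide))
              (fun h => nadj 3 1 (by decide) (by rw [← h]; exact hxc))
              (nadj 0 2 (by decide)) (nadj 0 1 (by decide)) huw' (nadj 0 3 (by decide)) nux
              (nei 0 2 (by decide)) (nei 0 1 (by decide))
              (fun h => nadj 0 1 (by decide) (by rw [h]; exact hw'a.symm))
              (nei 0 3 (by decide))
              (fun h => nadj 0 2 (by decide) (by rw [h]; exact hxb.symm))
        have huy : G.Adj (e 0) y := by
          by_contra nuy
          by_cases huw : G.Adj (e 0) w
          · by_cases huw' : G.Adj (e 0) w'
            · exact tri (e 0) w w' huw huw' hww'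
            · -- cycle D = (a, w', c, d, y)
              exact k1c5_config G tri hmaxtf hH10 (e 0) (e 1) w' (e 3) (e 4) y
                hw'a hw'c.symm Ecd hyd hya.symm
                (nadj 1 3 (by decide))
                (fun h => ndw' h.symm)
                ncy
                (nadj 4 1 (by decide))
                (fun h => tri y (e 1) w' hya.symm h hw'a)
                (nei 1 3 (by decide))
                (fun h => nadj 4 1 (by decide) (by rw [← h]; exact hw'a.symm))
                (fun h => nadj 3 1 (by decide) (by rw [h]; exact hya.symm))
                (nei 4 1 (by decide))
                (fun h => ncy (by rw [h]; exact hw'c))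
                (nadj 0 1 (by decide)) huw' (nadj 0 3 (by decide)) (nadj 0 4 (by decide)) nuy
                (nei 0 1 (by decide))
                (fun h => nadj 0 1 (by decide) (by rw [h]; exact hw'a.symm))
                (nei 0 3 (by decide)) (nei 0 4 (by decide))
                (fun h => nadj 0 1 (by decide) (by rw [h]; exact hya.symm))
          · -- cycle A = (y, a, b, w, d)
            exact k1c5_config G tri hmaxtf hH10 (e 0) y (e 1) (e 2) w (e 4)
              hya.symm Eab hwb hwd.symm hyd
              (fun h => nby h.symm)
              naw
              (nadj 2 4 (by decide))
              (fun h => tri w (e 4) y hwd.symm h hyd)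
              (nadj 4 1 (by decide))
              (fun h => nadj 2 4 (by decide) (by rw [← h]; exact hyd.symm))
              (fun h => nadj 1 4 (by decide) (by rw [h]; exact hwd.symm))
              (nei 2 4 (by decide))
              (fun h => naw (by rw [h]; exact hya))
              (nei 4 1 (by decide))
              nuy (nadj 0 1 (by decide)) (nadj 0 2 (by decide)) huw (nadj 0 4 (by decide))
              (fun h => nadj 0 1 (by decide) (by rw [h]; exact hya.symm))
              (nei 0 1 (by decide)) (nei 0 2 (by decide))
              (fun h => nadj 0 2 (by decide) (by rw [h]; exact hwb.symm))
              (nei 0 4 (by decide))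
        exact tri (e 0) x y hux huy hxy
      · -- induced C6 (a, b, w, d, c, w')
        exact hH10 (c6_config G tri hmaxtf (e 1) (e 2) w (e 4) (e 3) w'
          Eab hwb hwd.symm Ecd.symm hw'c hw'a.symm
          naw (nadj 2 4 (by decide)) (fun h => ncw h.symm) ndw'
          (nadj 3 1 (by decide)) (fun h => nbw' h.symm)
          (nadj 1 4 (by decide)) (nadj 2 3 (by decide)) hww'
          (nei 1 4 (by decide)) (nei 2 3 (by decide))
          (fun h => nbw' (by rw [← h]; exact hwb))
          (fun h => nadj 1 4 (by decide) (by rw [h]; exact hwd.symm))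
          (nei 2 4 (by decide))
          (fun h => nadj 3 2 (by decide) (by rw [← h]; exact hwb.symm))
          (fun h => nadj 4 1 (by decide) (by rw [h]; exact hw'a.symm))
          (nei 3 1 (by decide))
          (fun h => nadj 2 3 (by decide) (by rw [← h]; exact hw'c.symm)))
    · -- induced C6 (a, b, x, c, d, y)
      exact hH10 (c6_config G tri hmaxtf (e 1) (e 2) x (e 3) (e 4) y
        Eab hxb hxc.symm Ecd hyd hya.symm
        nax (nadj 2 3 (by decide)) (fun h => ndx h.symm) ncy
        (nadj 4 1 (by decide)) (fun h => nby h.symm)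
        (nadj 1 3 (by decide)) (nadj 2 4 (by decide)) hxy
        (nei 1 3 (by decide)) (nei 2 4 (by decide))
        (fun h => nby (by rw [← h]; exact hxb))
        (fun h => nadj 1 3 (by decide) (by rw [h]; exact hxc.symm))
        (nei 2 3 (by decide))
        (fun h => nadj 4 2 (by decide) (by rw [← h]; exact hxb.symm))
        (fun h => nadj 3 1 (by decide) (by rw [h]; exact hya.symm))
        (nei 4 1 (by decide))
        (fun h => nadj 2 4 (by decide) (by rw [← h]; exact hyd.symm)))
  · rintro ⟨e⟩
    have adj : ∀ i j : Fin 6, K1plusC5.Adj i j → G.Adj (e i) (e j) :=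
      fun i j h => e.map_adj_iff.mpr h
    have nadj : ∀ i j : Fin 6, ¬ K1plusC5.Adj i j → ¬ G.Adj (e i) (e j) :=
      fun i j h hg => h (e.map_adj_iff.mp hg)
    have nei : ∀ i j : Fin 6, i ≠ j → e i ≠ e j := fun i j h hh => h (e.injective hh)
    exact k1c5_config G tri hmaxtf hH10 (e 0) (e 1) (e 2) (e 3) (e 4) (e 5)
      (adj 1 2 (by decide)) (adj 2 3 (by decide)) (adj 3 4 (by decide))
      (adj 4 5 (by decide)) (adj 5 1 (by decide))
      (nadj 1 3 (by decide)) (nadj 2 4 (by decide)) (nadj 3 5 (by decide))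
      (nadj 4 1 (by decide)) (nadj 5 2 (by decide))
      (nei 1 3 (by decide)) (nei 2 4 (by decide)) (nei 3 5 (by decide))
      (nei 4 1 (by decide)) (nei 5 2 (by decide))
      (nadj 0 1 (by decide)) (nadj 0 2 (by decide)) (nadj 0 3 (by decide))
      (nadj 0 4 (by decide)) (nadj 0 5 (by decide))
      (nei 0 1 (by decide)) (nei 0 2 (by decide)) (nei 0 3 (by decide))
      (nei 0 4 (by decide)) (nei 0 5 (by decide))
  · rintro ⟨e⟩
    have adj : ∀ i j : ZMod 6, C6.Adj i j → G.Adj (e i) (e j) :=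
      fun i j h => e.map_adj_iff.mpr h
    have nadj : ∀ i j : ZMod 6, ¬ C6.Adj i j → ¬ G.Adj (e i) (e j) :=
      fun i j h hg => h (e.map_adj_iff.mp hg)
    have nei : ∀ i j : ZMod 6, i ≠ j → e i ≠ e j := fun i j h hh => h (e.injective hh)
    exact hH10 (c6_config G tri hmaxtf (e 0) (e 1) (e 2) (e 3) (e 4) (e 5)
      (adj 0 1 (by decide)) (adj 1 2 (by decide)) (adj 2 3 (by decide))
      (adj 3 4 (by decide)) (adj 4 5 (by decide)) (adj 5 0 (by decide))
      (nadj 0 2 (by decide)) (nadj 1 3 (by decide)) (nadj 2 4 (by decide))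
      (nadj 3 5 (by decide)) (nadj 4 0 (by decide)) (nadj 5 1 (by decide))
      (nadj 0 3 (by decide)) (nadj 1 4 (by decide)) (nadj 2 5 (by decide))
      (nei 0 3 (by decide)) (nei 1 4 (by decide)) (nei 2 5 (by decide))
      (nei 0 2 (by decide)) (nei 1 3 (by decide)) (nei 2 4 (by decide))
      (nei 3 5 (by decide)) (nei 4 0 (by decide)) (nei 5 1 (by decide)))
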